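/- (Convergence of the two-step method.) Suppose f is bounded below by f_inf ∈ ℝ, g is Lipschitz with constant L > 0, and H is Lipschitz in operator norm with constant σ > 0. Fix γ, δ, ζ ∈ (0,1], θ > 0, η ∈ [1,∞), α ∈ (0, 2δζ/(Lη²)), and β ∈ (0, 3γ/(σθ)). Let sequences (x_k), (x̂_k), (d_k), (ŝ_k) in E (k ∈ ℕ, k ≥ 1) satisfy for every k: (i) if λ(x_k) ≥ 0 then d_k = 0, and otherwise ⟪d_k, H(x_k) d_k⟫ ≤ γ λ(x_k) ‖d_k‖², ⟪g(x_k), d_k⟫ ≤ 0, and ‖d_k‖ = θ|λ(x_k)|; (ii) x̂_k = x_k + β d_k; (iii) if g(x̂_k) = 0 then ŝ_k = 0, and otherwise −⟪g(x̂_k), ŝ_k⟫ ≥ δ ‖ŝ_k‖ ‖g(x̂_k)‖ and ζ ‖g(x̂_k)‖ ≤ ‖ŝ_k‖ ≤ η ‖g(x̂_k)‖; (iv) x_{k+1} = x̂_k + α ŝ_k. Then ‖g(x_k)‖ → 0 as k → ∞ and liminf_{k→∞} λ(x_k) ≥ 0. -/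

import Mathlib

/-!
Each iteration decreases `f` by `c₁ (λ(x_k)⁻)³ + c₂ ‖∇f(x̂_k)‖²`. The negative-curvature step gains
`c₁ = β²θ²(γ/2 - σβθ/6)` from the cubic upper model that the Lipschitz Hessian provides, and the
gradient step gains `c₂ = αζ(δ - Lαη/2)` from the quadratic upper model that the Lipschitz gradient
provides; the step-size bounds are exactly what makes `c₁, c₂ > 0`. As `f` is bounded below, these
decreases are summable, so `λ(x_k)⁻ → 0` and `∇f(x̂_k) → 0`; since `‖x_k - x̂_k‖ = βθ λ(x_k)⁻`,
the Lipschitz gradient transfers the latter to `∇f(x_k) → 0`.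
-/

open scoped RealInnerProductSpace
open Filter Topology Set

theorem norm_sub_le_of_norm_deriv_le_mul_pow {F : Type*} [NormedAddCommGroup F] [NormedSpace ℝ F]
    {φ φ' : ℝ → F} {C : ℝ} {k : ℕ} (hφ : ∀ t ∈ Icc (0 : ℝ) 1, HasDerivAt φ (φ' t) t)
    (hφ' : ∀ t ∈ Icc (0 : ℝ) 1, ‖φ' t‖ ≤ C * t ^ k) :
    ‖φ 1 - φ 0‖ ≤ C / (k + 1) := by
  have hB (t : ℝ) : HasDerivAt (fun t => C / (k + 1) * t ^ (k + 1)) (C * t ^ k) t := by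
    refine ((hasDerivAt_pow (k + 1) t).const_mul _).congr_deriv ?_
    push_cast
    field_simp
  simpa using image_norm_le_of_norm_deriv_right_le_deriv_boundary (f := fun t => φ t - φ 0)
    (fun t ht => ((hφ t ht).sub_const _).continuousAt.continuousWithinAt)
    (fun t ht => ((hφ t (Ico_subset_Icc_self ht)).sub_const _).hasDerivWithinAt)
    (by simp) hB (fun t ht => hφ' t (Ico_subset_Icc_self ht)) (right_mem_Icc.2 zero_le_one)

theorem summable_of_le_sub_succ {a F : ℕ → ℝ} {b : ℝ} (ha : ∀ k, 0 ≤ a k)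
    (haF : ∀ k, a k ≤ F k - F (k + 1)) (hF : ∀ k, b ≤ F k) : Summable a :=
  summable_of_sum_range_le ha fun N => calc
    ∑ k ∈ Finset.range N, a k ≤ ∑ k ∈ Finset.range N, (F k - F (k + 1)) :=
      Finset.sum_le_sum fun k _ => haF k
    _ = F 0 - F N := Finset.sum_range_sub' F N
    _ ≤ F 0 - b := by linarith [hF N]

theorem tendsto_zero_of_summable_const_mul_pow {u : ℕ → ℝ} {c : ℝ} {k : ℕ} (hc : c ≠ 0)
    (hk : k ≠ 0) (hu : ∀ i, 0 ≤ u i) (h : Summable fun i => c * u i ^ k) :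
    Tendsto u atTop (𝓝 0) := by
  have hpow := ((summable_mul_left_iff hc).1 h).tendsto_atTop_zero.rpow_const
    (p := (k⁻¹ : ℝ)) (Or.inr (by positivity))
  simpa [Real.pow_rpow_inv_natCast (hu _) hk, Real.zero_rpow (by positivity : (k⁻¹ : ℝ) ≠ 0)]
    using hpow

theorem zero_le_liminf_coe_of_tendsto_negPart {ι : Type*} {l : Filter ι} [l.NeBot] {u : ι → ℝ}
    (h : Tendsto (fun i => (u i)⁻) l (𝓝 0)) : (0 : EReal) ≤ liminf (fun i => (u i : EReal)) l := by
  have hneg : Tendsto (fun i => ((-(u i)⁻ : ℝ) : EReal)) l (𝓝 0) := by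
    simpa [Function.comp_def] using (continuous_coe_real_ereal.tendsto _).comp h.neg
  calc (0 : EReal) = liminf (fun i => ((-(u i)⁻ : ℝ) : EReal)) l := hneg.liminf_eq.symm
    _ ≤ liminf (fun i => (u i : EReal)) l :=
      liminf_le_liminf (Eventually.of_forall fun i => EReal.coe_le_coe_iff.2 (by
        have := neg_le_negPart (u i); linarith))

theorem norm_eq_mul_negPart {E : Type*} [SeminormedAddGroup E] {d : E} {lam θ : ℝ}
    (hd0 : 0 ≤ lam → d = 0) (hd : lam < 0 → ‖d‖ = θ * |lam|) : ‖d‖ = θ * lam⁻ := by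
  rcases le_or_gt 0 lam with hlam | hlam
  · simp [hd0 hlam, negPart_eq_zero.2 hlam]
  · rw [hd hlam, negPart_eq_neg.2 hlam.le, abs_of_neg hlam]

theorem hasDerivAt_add_smul {E : Type*} [NormedAddCommGroup E] [NormedSpace ℝ E] (x v : E)
    (t : ℝ) : HasDerivAt (fun t : ℝ => x + t • v) v t := by
  simpa using ((hasDerivAt_id t).smul_const v).const_add x

section

variable {E : Type*} [NormedAddCommGroup E] [InnerProductSpace ℝ E] [CompleteSpace E]
  {f : E → ℝ} {H : E → E →L[ℝ] E} {L σ : ℝ}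

theorem hasDerivAt_apply_add_smul (hf : Differentiable ℝ f) (x v : E) (t : ℝ) :
    HasDerivAt (fun t : ℝ => f (x + t • v)) ⟪gradient f (x + t • v), v⟫ t := by
  simpa [Function.comp_def] using
    (hf (x + t • v)).hasGradientAt.hasFDerivAt.comp_hasDerivAt t (hasDerivAt_add_smul x v t)

theorem apply_add_le_of_gradient_lipschitz (hf : Differentiable ℝ f)
    (hgLip : ∀ x y, ‖gradient f x - gradient f y‖ ≤ L * ‖x - y‖) (x v : E) :
    f (x + v) ≤ f x + ⟪gradient f x, v⟫ + L / 2 * ‖v‖ ^ 2 := by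
  have hφ (t : ℝ) : HasDerivAt (fun t : ℝ => f (x + t • v) - t * ⟪gradient f x, v⟫)
      ⟪gradient f (x + t • v) - gradient f x, v⟫ t := by
    rw [inner_sub_left]
    exact (hasDerivAt_apply_add_smul hf x v t).sub (hasDerivAt_mul_const _)
  have := norm_sub_le_of_norm_deriv_le_mul_pow (k := 1) (C := L * ‖v‖ ^ 2)
    (fun t _ => hφ t) fun t ht => calc
      ‖⟪gradient f (x + t • v) - gradient f x, v⟫‖
          ≤ ‖gradient f (x + t • v) - gradient f x‖ * ‖v‖ := norm_inner_le_norm _ _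
      _ ≤ L * ‖t • v‖ * ‖v‖ := by gcongr; simpa using hgLip (x + t • v) x
      _ = L * ‖v‖ ^ 2 * t ^ 1 := by rw [norm_smul, Real.norm_of_nonneg ht.1]; ring
  simp only [one_smul, zero_smul, add_zero, one_mul, zero_mul, sub_zero, Nat.cast_one,
    one_add_one_eq_two, Real.norm_eq_abs] at this
  linarith [(le_abs_self _).trans this]

theorem norm_gradient_add_sub_sub_le (hH : ∀ x, HasFDerivAt (gradient f) (H x) x)
    (hHLip : ∀ x y, ‖H x - H y‖ ≤ σ * ‖x - y‖) (x v : E) :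
    ‖gradient f (x + v) - gradient f x - H x v‖ ≤ σ / 2 * ‖v‖ ^ 2 := by
  have hφ (t : ℝ) : HasDerivAt (fun t : ℝ => gradient f (x + t • v) - t • H x v)
      (H (x + t • v) v - H x v) t := by
    have := ((hH _).comp_hasDerivAt t (hasDerivAt_add_smul x v t)).sub
      ((hasDerivAt_id t).smul_const (H x v))
    rwa [one_smul] at this
  have := norm_sub_le_of_norm_deriv_le_mul_pow (k := 1) (C := σ * ‖v‖ ^ 2)
    (fun t _ => hφ t) fun t ht => calc
      ‖H (x + t • v) v - H x v‖ ≤ ‖H (x + t • v) - H x‖ * ‖v‖ :=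
        (H (x + t • v) - H x).le_opNorm v
      _ ≤ σ * ‖t • v‖ * ‖v‖ := by gcongr; simpa using hHLip (x + t • v) x
      _ = σ * ‖v‖ ^ 2 * t ^ 1 := by rw [norm_smul, Real.norm_of_nonneg ht.1]; ring
  simp only [one_smul, zero_smul, add_zero, sub_zero, Nat.cast_one, one_add_one_eq_two,
    sub_right_comm _ (H x v)] at this
  linarith

theorem apply_add_le_of_hessian_lipschitz (hf : Differentiable ℝ f)
    (hH : ∀ x, HasFDerivAt (gradient f) (H x) x)
    (hHLip : ∀ x y, ‖H x - H y‖ ≤ σ * ‖x - y‖) (x v : E) :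
    f (x + v) ≤ f x + ⟪gradient f x, v⟫ + 1 / 2 * ⟪v, H x v⟫ + σ / 6 * ‖v‖ ^ 3 := by
  have hφ (t : ℝ) : HasDerivAt
      (fun t : ℝ => f (x + t • v) - t * ⟪gradient f x, v⟫ - t ^ 2 / 2 * ⟪v, H x v⟫)
      ⟪gradient f (x + t • v) - gradient f x - H x (t • v), v⟫ t := by
    refine ((hasDerivAt_apply_add_smul hf x v t).sub (hasDerivAt_mul_const _)).sub
      (((hasDerivAt_pow 2 t).div_const 2).mul_const _) |>.congr_deriv ?_
    rw [inner_sub_left, inner_sub_left, map_smul, real_inner_smul_left, real_inner_comm v (H x v)]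
    push_cast
    ring
  have := norm_sub_le_of_norm_deriv_le_mul_pow (k := 2) (C := σ / 2 * ‖v‖ ^ 3)
    (fun t _ => hφ t) fun t ht => calc
      ‖⟪gradient f (x + t • v) - gradient f x - H x (t • v), v⟫‖
          ≤ ‖gradient f (x + t • v) - gradient f x - H x (t • v)‖ * ‖v‖ :=
        norm_inner_le_norm _ _
      _ ≤ σ / 2 * ‖t • v‖ ^ 2 * ‖v‖ := by gcongr; exact norm_gradient_add_sub_sub_le hH hHLip x _
      _ = σ / 2 * ‖v‖ ^ 3 * t ^ 2 := by rw [norm_smul, Real.norm_of_nonneg ht.1]; ring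
  simp only [one_smul, zero_smul, add_zero, one_mul, zero_mul, sub_zero, one_pow, Nat.cast_ofNat,
    Real.norm_eq_abs] at this
  linarith [(le_abs_self _).trans this]

theorem negative_curvature_step_le (hf : Differentiable ℝ f)
    (hH : ∀ x, HasFDerivAt (gradient f) (H x) x)
    (hHLip : ∀ x y, ‖H x - H y‖ ≤ σ * ‖x - y‖) {x d : E} {lam γ θ β : ℝ} (hβ : 0 ≤ β)
    (hd0 : 0 ≤ lam → d = 0)
    (hd : lam < 0 → ⟪d, H x d⟫ ≤ γ * lam * ‖d‖ ^ 2 ∧ ⟪gradient f x, d⟫ ≤ 0 ∧ ‖d‖ = θ * |lam|) :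
    f (x + β • d) ≤ f x - β ^ 2 * θ ^ 2 * (γ / 2 - σ * β * θ / 6) * lam⁻ ^ 3 := by
  have hnorm := norm_eq_mul_negPart hd0 fun h => (hd h).2.2
  rcases le_or_gt 0 lam with hlam | hlam
  · simp [hd0 hlam, negPart_eq_zero.2 hlam]
  obtain ⟨hcurv, hdesc, -⟩ := hd hlam
  have key := apply_add_le_of_hessian_lipschitz hf hH hHLip x (β • d)
  rw [negPart_eq_neg.2 hlam.le] at hnorm ⊢
  rw [real_inner_smul_right, map_smul, real_inner_smul_left, real_inner_smul_right, norm_smul,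
    Real.norm_of_nonneg hβ, hnorm] at key
  rw [hnorm] at hcurv
  linarith [mul_nonpos_of_nonneg_of_nonpos hβ hdesc, mul_le_mul_of_nonneg_left hcurv (sq_nonneg β)]

theorem gradient_step_le (hf : Differentiable ℝ f)
    (hgLip : ∀ x y, ‖gradient f x - gradient f y‖ ≤ L * ‖x - y‖) (hL : 0 ≤ L) {y s : E}
    {α δ ζ η : ℝ} (hα : 0 ≤ α) (hαL : L * α * η / 2 ≤ δ) (hs0 : gradient f y = 0 → s = 0)
    (hs : gradient f y ≠ 0 →
      -⟪gradient f y, s⟫ ≥ δ * ‖s‖ * ‖gradient f y‖ ∧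
      ζ * ‖gradient f y‖ ≤ ‖s‖ ∧ ‖s‖ ≤ η * ‖gradient f y‖) :
    f (y + α • s) ≤ f y - α * ζ * (δ - L * α * η / 2) * ‖gradient f y‖ ^ 2 := by
  by_cases hg : gradient f y = 0
  · simp [hs0 hg, hg]
  obtain ⟨hangle, hlow, hup⟩ := hs hg
  have key := apply_add_le_of_gradient_lipschitz hf hgLip y (α • s)
  have hG := norm_nonneg (gradient f y)
  have hS := norm_nonneg s
  rw [real_inner_smul_right, norm_smul, Real.norm_of_nonneg hα] at key
  linarith [mul_le_mul_of_nonneg_left hangle hα,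
    mul_le_mul_of_nonneg_left hup (by positivity : 0 ≤ L / 2 * α ^ 2 * ‖s‖),
    mul_le_mul_of_nonneg_left hlow
      (mul_nonneg (mul_nonneg hα hG) (sub_nonneg.2 hαL))]

theorem norm_gradient_le_add_of_lipschitz
    (hgLip : ∀ x y, ‖gradient f x - gradient f y‖ ≤ L * ‖x - y‖) (x v : E) :
    ‖gradient f x‖ ≤ ‖gradient f (x + v)‖ + L * ‖v‖ := calc
  ‖gradient f x‖ ≤ ‖gradient f (x + v)‖ + ‖gradient f x - gradient f (x + v)‖ :=
    norm_le_norm_add_norm_sub' _ _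
  _ ≤ ‖gradient f (x + v)‖ + L * ‖v‖ := by
    grw [hgLip, sub_add_cancel_left, norm_neg]

end

theorem two_step_method_convergence_general
    (n : ℕ)
    (f : EuclideanSpace ℝ (Fin n) → ℝ) (hf : ContDiff ℝ 2 f)
    (f_inf : ℝ) (hfbdd : ∀ y, f_inf ≤ f y)
    (H : EuclideanSpace ℝ (Fin n) → EuclideanSpace ℝ (Fin n) →L[ℝ] EuclideanSpace ℝ (Fin n))
    (hH : ∀ x, HasFDerivAt (gradient f) (H x) x)
    (lam : EuclideanSpace ℝ (Fin n) → ℝ)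
    (L : ℝ) (hL : 0 < L)
    (hgLip : ∀ x y, ‖gradient f x - gradient f y‖ ≤ L * ‖x - y‖)
    (σ : ℝ) (hσ : 0 < σ)
    (hHLip : ∀ x y, ‖H x - H y‖ ≤ σ * ‖x - y‖)
    (γ δ ζ : ℝ) (hδ : δ ∈ Set.Ioc (0 : ℝ) 1)
    (hζ : ζ ∈ Set.Ioc (0 : ℝ) 1)
    (θ : ℝ) (hθ : 0 < θ) (η : ℝ) (hη : 1 ≤ η)
    (α : ℝ) (hα : α ∈ Set.Ioo (0 : ℝ) (2 * δ * ζ / (L * η ^ 2)))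
    (β : ℝ) (hβ : β ∈ Set.Ioo (0 : ℝ) (3 * γ / (σ * θ)))
    (x xhat d shat : ℕ → EuclideanSpace ℝ (Fin n))
    (hd0 : ∀ k, 0 ≤ lam (x k) → d k = 0)
    (hd : ∀ k, lam (x k) < 0 →
      ⟪d k, H (x k) (d k)⟫ ≤ γ * lam (x k) * ‖d k‖ ^ 2 ∧
      ⟪gradient f (x k), d k⟫ ≤ 0 ∧ ‖d k‖ = θ * |lam (x k)|)
    (hxhat : ∀ k, xhat k = x k + β • d k)
    (hs0 : ∀ k, gradient f (xhat k) = 0 → shat k = 0)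
    (hs : ∀ k, gradient f (xhat k) ≠ 0 →
      -⟪gradient f (xhat k), shat k⟫ ≥ δ * ‖shat k‖ * ‖gradient f (xhat k)‖ ∧
      ζ * ‖gradient f (xhat k)‖ ≤ ‖shat k‖ ∧ ‖shat k‖ ≤ η * ‖gradient f (xhat k)‖)
    (hxnext : ∀ k, x (k + 1) = xhat k + α • shat k) :
    Tendsto (fun k => ‖gradient f (x k)‖) atTop (nhds 0) ∧
    (0 : EReal) ≤ liminf (fun k => (lam (x k) : EReal)) atTop := by
  obtain ⟨hα0, hα⟩ := hα
  obtain ⟨hβ0, hβ⟩ := hβ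
  have hfd : Differentiable ℝ f := hf.differentiable (by norm_num)
  have hσβθ : σ * β * θ < 3 * γ := by
    have := (lt_div_iff₀ (by positivity)).1 hβ
    linarith
  have hLαη : L * α * η / 2 < δ := by
    have := (lt_div_iff₀ (by positivity)).1 hα
    nlinarith [hδ.1, hζ.2, mul_le_mul_of_nonneg_left hη
      (mul_pos (mul_pos hL hα0) (zero_lt_one.trans_le hη)).le]
  set c₁ := β ^ 2 * θ ^ 2 * (γ / 2 - σ * β * θ / 6) with hc₁_def
  set c₂ := α * ζ * (δ - L * α * η / 2) with hc₂_def
  have hc₁ : 0 < c₁ := mul_pos (by positivity) (by linarith)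
  have hc₂ : 0 < c₂ := mul_pos (mul_pos hα0 hζ.1) (by linarith)
  have hdecrease (k : ℕ) :
      c₁ * (lam (x k))⁻ ^ 3 + c₂ * ‖gradient f (xhat k)‖ ^ 2 ≤ f (x k) - f (x (k + 1)) := by
    have hcurv := negative_curvature_step_le hfd hH hHLip hβ0.le (hd0 k) (hd k)
    have hgrad := gradient_step_le hfd hgLip hL.le hα0.le hLαη.le (hs0 k) (hs k)
    rw [← hxhat] at hcurv
    rw [← hxnext] at hgrad
    rw [hc₁_def, hc₂_def]
    linarith
  have hsum := summable_of_le_sub_succ (fun k => by positivity) hdecrease fun k => hfbdd (x k)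
  have hm : Tendsto (fun k => (lam (x k))⁻) atTop (𝓝 0) :=
    tendsto_zero_of_summable_const_mul_pow hc₁.ne' three_ne_zero (fun k => negPart_nonneg _)
      (hsum.of_nonneg_of_le (fun k => by positivity)
        fun k => le_add_of_nonneg_right (by positivity))
  have hG : Tendsto (fun k => ‖gradient f (xhat k)‖) atTop (𝓝 0) :=
    tendsto_zero_of_summable_const_mul_pow hc₂.ne' two_ne_zero (fun k => norm_nonneg _)
      (hsum.of_nonneg_of_le (fun k => by positivity)
        fun k => le_add_of_nonneg_left (by positivity))
  have hbound (k : ℕ) :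
      ‖gradient f (x k)‖ ≤ ‖gradient f (xhat k)‖ + L * β * θ * (lam (x k))⁻ := by
    have := norm_gradient_le_add_of_lipschitz hgLip (x k) (β • d k)
    rwa [← hxhat, norm_smul, Real.norm_of_nonneg hβ0.le,
      norm_eq_mul_negPart (hd0 k) fun h => (hd k h).2.2, ← mul_assoc, ← mul_assoc] at this
  refine ⟨squeeze_zero (fun k => norm_nonneg _) hbound ?_, zero_le_liminf_coe_of_tendsto_negPart hm⟩
  simpa using hG.add (hm.const_mul (L * β * θ))

/-- convergence of the two-step method. -/
theorem two_step_method_convergence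
    (n : ℕ) (hn : 1 ≤ n)
    (f : EuclideanSpace ℝ (Fin n) → ℝ) (hf : ContDiff ℝ 2 f)
    (f_inf : ℝ) (hfbdd : ∀ y, f_inf ≤ f y)
    (H : EuclideanSpace ℝ (Fin n) → EuclideanSpace ℝ (Fin n) →L[ℝ] EuclideanSpace ℝ (Fin n))
    (hH : ∀ x, HasFDerivAt (gradient f) (H x) x)
    (hHsym : ∀ x u v, ⟪H x u, v⟫ = ⟪u, H x v⟫)
    (lam : EuclideanSpace ℝ (Fin n) → ℝ)
    (hlam : ∀ x, lam x =
      sInf {r : ℝ | ∃ u : EuclideanSpace ℝ (Fin n), ‖u‖ = 1 ∧ r = ⟪u, H x u⟫})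
    (L : ℝ) (hL : 0 < L)
    (hgLip : ∀ x y, ‖gradient f x - gradient f y‖ ≤ L * ‖x - y‖)
    (σ : ℝ) (hσ : 0 < σ)
    (hHLip : ∀ x y, ‖H x - H y‖ ≤ σ * ‖x - y‖)
    (γ δ ζ : ℝ) (hγ : γ ∈ Set.Ioc (0 : ℝ) 1) (hδ : δ ∈ Set.Ioc (0 : ℝ) 1)
    (hζ : ζ ∈ Set.Ioc (0 : ℝ) 1)
    (θ : ℝ) (hθ : 0 < θ) (η : ℝ) (hη : 1 ≤ η)
    (α : ℝ) (hα : α ∈ Set.Ioo (0 : ℝ) (2 * δ * ζ / (L * η ^ 2)))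
    (β : ℝ) (hβ : β ∈ Set.Ioo (0 : ℝ) (3 * γ / (σ * θ)))
    (x xhat d shat : ℕ → EuclideanSpace ℝ (Fin n))
    (hd0 : ∀ k, 0 ≤ lam (x k) → d k = 0)
    (hd : ∀ k, lam (x k) < 0 →
      ⟪d k, H (x k) (d k)⟫ ≤ γ * lam (x k) * ‖d k‖ ^ 2 ∧
      ⟪gradient f (x k), d k⟫ ≤ 0 ∧ ‖d k‖ = θ * |lam (x k)|)
    (hxhat : ∀ k, xhat k = x k + β • d k)
    (hs0 : ∀ k, gradient f (xhat k) = 0 → shat k = 0)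
    (hs : ∀ k, gradient f (xhat k) ≠ 0 →
      -⟪gradient f (xhat k), shat k⟫ ≥ δ * ‖shat k‖ * ‖gradient f (xhat k)‖ ∧
      ζ * ‖gradient f (xhat k)‖ ≤ ‖shat k‖ ∧ ‖shat k‖ ≤ η * ‖gradient f (xhat k)‖)
    (hxnext : ∀ k, x (k + 1) = xhat k + α • shat k) :
    Tendsto (fun k => ‖gradient f (x k)‖) atTop (nhds 0) ∧
    (0 : EReal) ≤ liminf (fun k => (lam (x k) : EReal)) atTop :=
  two_step_method_convergence_general n f hf f_inf hfbdd H hH lam L hL hgLip σ hσ hHLip γ δ ζ hδ hζ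
    θ hθ η hη α hα β hβ x xhat d shat hd0 hd hxhat hs0 hs hxnext
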